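/- Let α be a Frenet curve in S³ with curvature κ and torsion τ, let a ∈ ℝ⁴ be a unit vector and let σ ∈ (−1,1), σ ≠ 0. If ⟨α(s),a⟩ = σ for all s ∈ I and τ(s) ≠ 0 for all s ∈ I, then for all s ∈ I: 1/κ(s)² + κ′(s)²/(κ(s)⁴τ(s)²) = (1 − σ²)/σ² (which equals 1/H² for the mean curvature H = σ/√(1−σ²) of the geodesic sphere U_{a,σ}). -/
import Mathlib


noncomputable section

/-- The standard Euclidean inner product on `ℝ⁴`. -/
def eprod (x y : Fin 4 → ℝ) : ℝ :=
  x 0 * y 0 + x 1 * y 1 + x 2 * y 2 + x 3 * y 3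

/-- A Frenet curve in the round sphere `S³ = {p ∈ ℝ⁴ : ⟨p,p⟩ = 1}`:
a `C⁴` unit-speed curve `α : I → S³` on an open interval `I`, together with a
Frenet frame `T, N, B`, a positive `C²` curvature `κ` and a `C¹` torsion `τ`,
such that `T(s), N(s), B(s), α(s)` is an orthonormal basis of `ℝ⁴` for each
`s ∈ I` and the Frenet equations `T′ = κN − α`, `N′ = −κT + τB`, `B′ = −τN`
hold on `I`. -/
structure FrenetCurveS3 where
  I : Set ℝ
  hopen : IsOpen I
  hconn : I.OrdConnected
  α : ℝ → Fin 4 → ℝ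
  T : ℝ → Fin 4 → ℝ
  N : ℝ → Fin 4 → ℝ
  B : ℝ → Fin 4 → ℝ
  κ : ℝ → ℝ
  τ : ℝ → ℝ
  hα_smooth : ContDiffOn ℝ 4 α I
  hκ_smooth : ContDiffOn ℝ 2 κ I
  hτ_smooth : ContDiffOn ℝ 1 τ I
  hκ_pos : ∀ s ∈ I, 0 < κ s
  h_sphere : ∀ s ∈ I, eprod (α s) (α s) = 1
  hT : ∀ s ∈ I, HasDerivAt α (T s) s
  hTT : ∀ s ∈ I, eprod (T s) (T s) = 1
  hNN : ∀ s ∈ I, eprod (N s) (N s) = 1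
  hBB : ∀ s ∈ I, eprod (B s) (B s) = 1
  hTN : ∀ s ∈ I, eprod (T s) (N s) = 0
  hTB : ∀ s ∈ I, eprod (T s) (B s) = 0
  hNB : ∀ s ∈ I, eprod (N s) (B s) = 0
  hTα : ∀ s ∈ I, eprod (T s) (α s) = 0
  hNα : ∀ s ∈ I, eprod (N s) (α s) = 0
  hBα : ∀ s ∈ I, eprod (B s) (α s) = 0
  hbasis : ∀ s ∈ I, ∀ v : Fin 4 → ℝ,
    eprod v v =
      eprod v (T s) ^ 2 + eprod v (N s) ^ 2 + eprod v (B s) ^ 2 + eprod v (α s) ^ 2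
  hFrenetT : ∀ s ∈ I, HasDerivAt T (κ s • N s - α s) s
  hFrenetN : ∀ s ∈ I, HasDerivAt N ((-κ s) • T s + τ s • B s) s
  hFrenetB : ∀ s ∈ I, HasDerivAt B ((-τ s) • N s) s


lemma hasDerivAt_eprod_const (X : ℝ → Fin 4 → ℝ) (X' a : Fin 4 → ℝ) (s : ℝ)
    (h : HasDerivAt X X' s) :
    HasDerivAt (fun t => eprod (X t) a) (eprod X' a) s := by
  have hi : ∀ i, HasDerivAt (fun t => X t i) (X' i) s := hasDerivAt_pi.mp h
  unfold eprod
  exact ((((hi 0).mul_const _).add ((hi 1).mul_const _)).add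
    ((hi 2).mul_const _)).add ((hi 3).mul_const _)

lemma eprod_sub_smul (c : ℝ) (x y a : Fin 4 → ℝ) :
    eprod (c • x - y) a = c * eprod x a - eprod y a := by
  unfold eprod; simp [Pi.smul_apply, Pi.sub_apply, smul_eq_mul]; ring

lemma eprod_add_smul (c d : ℝ) (x y a : Fin 4 → ℝ) :
    eprod (c • x + d • y) a = c * eprod x a + d * eprod y a := by
  unfold eprod; simp [Pi.smul_apply, Pi.add_apply, smul_eq_mul]; ring

lemma eprod_comm (x y : Fin 4 → ℝ) : eprod x y = eprod y x := by
  unfold eprod; ring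

/-- If a Frenet curve `α` in `S³` with nowhere vanishing torsion is contained
in a geodesic sphere `U_{a,σ}` (`a` a unit vector, `σ ∈ (−1,1)`, `σ ≠ 0`),
then `1/κ² + κ′²/(κ⁴τ²) = (1 − σ²)/σ²` (which is `1/H²` for the mean
curvature `H = σ/√(1−σ²)` of `U_{a,σ}`). -/
theorem spherelike_equation_of_contained_in_geodesic_sphere_S3
    (F : FrenetCurveS3) (a : Fin 4 → ℝ) (σ : ℝ)
    (ha : eprod a a = 1) (hσ : σ ∈ Set.Ioo (-1 : ℝ) 1) (hσ0 : σ ≠ 0)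
    (hcontained : ∀ s ∈ F.I, eprod (F.α s) a = σ)
    (hτ : ∀ s ∈ F.I, F.τ s ≠ 0) :
    ∀ s ∈ F.I,
      1 / F.κ s ^ 2 + (deriv F.κ s) ^ 2 / (F.κ s ^ 4 * F.τ s ^ 2)
        = (1 - σ ^ 2) / σ ^ 2 := by
  -- Step 1: ⟨T, a⟩ = 0 on I
  have hTa : ∀ t ∈ F.I, eprod (F.T t) a = 0 := by
    intro t ht
    have hd1 : HasDerivAt (fun u => eprod (F.α u) a) (eprod (F.T t) a) t :=
      hasDerivAt_eprod_const _ _ _ _ (F.hT t ht)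
    have hev : (fun u => eprod (F.α u) a) =ᶠ[nhds t] fun _ => σ :=
      Filter.eventually_of_mem (F.hopen.mem_nhds ht) hcontained
    have hd2 : HasDerivAt (fun u => eprod (F.α u) a) 0 t :=
      (hasDerivAt_const t σ).congr_of_eventuallyEq hev
    exact hd1.unique hd2
  -- Step 2: ⟨N, a⟩ = σ / κ on I
  have hNa : ∀ t ∈ F.I, eprod (F.N t) a = σ / F.κ t := by
    intro t ht
    have hd1 : HasDerivAt (fun u => eprod (F.T u) a)
        (eprod (F.κ t • F.N t - F.α t) a) t :=
      hasDerivAt_eprod_const _ _ _ _ (F.hFrenetT t ht)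
    have hev : (fun u => eprod (F.T u) a) =ᶠ[nhds t] fun _ => 0 :=
      Filter.eventually_of_mem (F.hopen.mem_nhds ht) hTa
    have hd2 : HasDerivAt (fun u => eprod (F.T u) a) 0 t :=
      (hasDerivAt_const t 0).congr_of_eventuallyEq hev
    have h0 := hd1.unique hd2
    rw [eprod_sub_smul, hcontained t ht] at h0
    have hκ := (F.hκ_pos t ht).ne'
    field_simp
    linarith
  intro s hs
  have hκpos := F.hκ_pos s hs
  have hκne := hκpos.ne'
  have hτne := hτ s hs
  -- Step 3: τ ⟨B, a⟩ = -σ κ' / κ²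
  have hκd : HasDerivAt F.κ (deriv F.κ s) s :=
    (((F.hκ_smooth.contDiffAt (F.hopen.mem_nhds hs)).differentiableAt
      (by norm_num)).hasDerivAt)
  have hd1 : HasDerivAt (fun u => eprod (F.N u) a)
      (eprod ((-F.κ s) • F.T s + F.τ s • F.B s) a) s :=
    hasDerivAt_eprod_const _ _ _ _ (F.hFrenetN s hs)
  have hdq : HasDerivAt (fun u => σ / F.κ u)
      ((0 * F.κ s - σ * deriv F.κ s) / F.κ s ^ 2) s :=
    (hasDerivAt_const s σ).div hκd hκne
  have hev : (fun u => σ / F.κ u) =ᶠ[nhds s] fun u => eprod (F.N u) a := by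
    filter_upwards [F.hopen.mem_nhds hs] with t ht
    exact (hNa t ht).symm
  have hd2 : HasDerivAt (fun u => eprod (F.N u) a)
      ((0 * F.κ s - σ * deriv F.κ s) / F.κ s ^ 2) s :=
    hdq.congr_of_eventuallyEq hev.symm
  have h0 := hd1.unique hd2
  rw [eprod_add_smul, hTa s hs] at h0
  have hBa : eprod (F.B s) a = -(σ * deriv F.κ s) / (F.κ s ^ 2 * F.τ s) := by
    field_simp at h0 ⊢
    linarith
  -- Step 4: expand a in the basis
  have hb := F.hbasis s hs a
  rw [ha, eprod_comm a (F.T s), eprod_comm a (F.N s), eprod_comm a (F.B s),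
    eprod_comm a (F.α s), hTa s hs, hNa s hs, hBa, hcontained s hs] at hb
  have hτ2 : F.τ s ^ 2 ≠ 0 := pow_ne_zero 2 hτne
  have hκ2 : F.κ s ≠ 0 := hκne
  field_simp at hb ⊢
  nlinarith [sq_nonneg (F.κ s), sq_nonneg (F.τ s), sq_nonneg σ, hb]
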